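/- Define mul : ℕ → ℕ → Multiset ℕ by mul x y = {x + y, Nat.dist x y} (the two-element multiset consisting of x + y and |x − y|). Then mul is associative in the multiset sense: for all x, y, z ∈ ℕ, (mul x y).bind (fun t => mul t z) = (mul y z).bind (fun t => mul x t) (an equality of 4-element multisets). Together with the unit 0 and inv = id, this makes ℕ a 2-valued group. -/
import Mathlib


/-- An `n`-valued group: multiplication takes values in `n`-element multisets. -/
structure NValuedGroup (n : ℕ) (X : Type*) where
  mul : X → X → Multiset X
  e : X
  inv : X → X
  one_le : 1 ≤ n
  card_mul : ∀ x y, (mul x y).card = n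
  assoc : ∀ x y z, (mul x y).bind (fun t => mul t z) = (mul y z).bind (fun t => mul x t)
  e_mul : ∀ x, mul e x = Multiset.replicate n x
  mul_e : ∀ x, mul x e = Multiset.replicate n x
  inv_mul : ∀ x, e ∈ mul (inv x) x
  mul_inv : ∀ x, e ∈ mul x (inv x)

variable {n : ℕ} {X : Type*}

/-- The multiset `x * s₁ * ⋯ * s_k` (iterated left-to-right, starting from `{x}`). -/
def NValuedGroup.wordProd (G : NValuedGroup n X) (x : X) (l : List X) : Multiset X :=
  l.foldl (fun m s => m.bind (fun t => G.mul t s)) {x}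

/-- The ball `B_S(x, r)`: elements lying in `Set(x * s₁ * ⋯ * s_m)` for some `m ≤ r`,
`s₁, …, s_m ∈ S`. -/
def NValuedGroup.ball (G : NValuedGroup n X) (S : Set X) (x : X) (r : ℕ) : Set X :=
  {y | ∃ l : List X, l.length ≤ r ∧ (∀ s ∈ l, s ∈ S) ∧ y ∈ G.wordProd x l}

/-- `S` generates `X`: every element lies in `Set(s₁ * ⋯ * s_m)` for some `m ≥ 1`,
`s₁, …, s_m ∈ S`. -/
def NValuedGroup.IsGenSet (G : NValuedGroup n X) (S : Set X) : Prop :=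
  ∀ x : X, ∃ s₀ ∈ S, ∃ l : List X, (∀ s ∈ l, s ∈ S) ∧ x ∈ G.wordProd s₀ l

lemma nat_pairL (a b c : ℕ) :
    ({Nat.dist a b + c, Nat.dist (Nat.dist a b) c} : Multiset ℕ) =
    {Nat.dist (a + c) b, Nat.dist a (b + c)} := by
  rcases le_total a b with h | h
  · rw [Multiset.pair_comm]
    simp only [Nat.dist]
    congr 1
    · omega
    · rw [Multiset.singleton_inj]; omega
  · simp only [Nat.dist]
    congr 1
    · omega
    · rw [Multiset.singleton_inj]; omega

lemma nat_pairR (a b c : ℕ) :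
    ({a + Nat.dist b c, Nat.dist a (Nat.dist b c)} : Multiset ℕ) =
    {Nat.dist (a + b) c, Nat.dist (a + c) b} := by
  rcases le_total b c with h | h
  · rw [Multiset.pair_comm]
    simp only [Nat.dist]
    congr 1
    · omega
    · rw [Multiset.singleton_inj]; omega
  · simp only [Nat.dist]
    congr 1
    · omega
    · rw [Multiset.singleton_inj]; omega

lemma nat_assoc_key (x y z : ℕ) :
      (({x + y, Nat.dist x y} : Multiset ℕ).bind (fun t => {t + z, Nat.dist t z})) =
      (({y + z, Nat.dist y z} : Multiset ℕ).bind (fun t => {x + t, Nat.dist x t})) := by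
  simp only [Multiset.insert_eq_cons, Multiset.cons_bind, Multiset.singleton_bind]
  have h1 := nat_pairL x y z
  have h2 := nat_pairR x y z
  simp only [Multiset.insert_eq_cons] at h1 h2
  rw [h1, h2]
  have hx : x + (y + z) = x + y + z := by omega
  rw [hx]
  ext a
  simp only [Multiset.count_add, Multiset.count_cons, Multiset.count_singleton]
  split_ifs <;> omega

/-- `mul x y = {x + y, |x - y|}` is associative in the multiset sense, and together with
the unit `0` and `inv = id` it makes `ℕ` a 2-valued group. -/
theorem nat_two_valued_group :
    (∀ x y z : ℕ,
      (({x + y, Nat.dist x y} : Multiset ℕ).bind (fun t => {t + z, Nat.dist t z})) =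
      (({y + z, Nat.dist y z} : Multiset ℕ).bind (fun t => {x + t, Nat.dist x t}))) ∧
    ∃ G : NValuedGroup 2 ℕ,
      G.mul = (fun x y => ({x + y, Nat.dist x y} : Multiset ℕ)) ∧ G.e = 0 ∧ G.inv = id := by
  refine ⟨nat_assoc_key, ⟨{
    mul := fun x y => ({x + y, Nat.dist x y} : Multiset ℕ)
    e := 0
    inv := id
    one_le := by norm_num
    card_mul := fun x y => rfl
    assoc := nat_assoc_key
    e_mul := by
      intro x
      show ({0 + x, Nat.dist 0 x} : Multiset ℕ) = _
      simp [Nat.dist, Multiset.replicate_succ]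
    mul_e := by
      intro x
      show ({x + 0, Nat.dist x 0} : Multiset ℕ) = _
      simp [Nat.dist, Multiset.replicate_succ]
    inv_mul := by intro x; simp [Nat.dist]
    mul_inv := by intro x; simp [Nat.dist] }, rfl, rfl, rfl⟩⟩
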